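/- Assume D((uC_φ)²) is dense in L²(μ), all J_i finite a.e., and fix k ≥ 1. Then uC_φ is k-hyperexpansive (Σ_{j=0}^{n} (-1)^j C(n,j) ‖(uC_φ)^j f‖² ≤ 0 for all f ∈ D((uC_φ)ⁿ) and all 1 ≤ n ≤ k) if and only if Δ_{J,i}(x) := Σ_{j=0}^{i} (-1)^j C(i,j) J_j(x) ≤ 0 μ-a.e. for each i = 1, …, k. -/

import Mathlib

/-!
Unwinding the Radon–Nikodym recursion gives `‖(uC_φ)^j f‖² = ∫ J_j |f|² dμ`, so the alternating
binomial sum of the `‖(uC_φ)^j f‖²` equals `∫ Δ_{J,n} |f|² dμ`; hence `Δ_{J,n} ≤ 0` a.e. gives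
hyperexpansivity. Conversely, if `Δ_{J,n} > 0` on a set of positive measure, σ-finiteness and the
a.e. finiteness of the `J_j` provide a subset `A` of finite positive measure on which
`J_0, …, J_n` are bounded; then `𝟙_A` lies in the domain of `(uC_φ)^n` and its alternating sum
is `∫_A Δ_{J,n} dμ > 0`.
-/

open MeasureTheory ENNReal Finset

section

variable {X : Type*} [MeasurableSpace X] {μ : Measure X}
  {E : Type*} [NormedAddCommGroup E] {ι : Type*}

lemma ofReal_norm_sq (z : E) : ENNReal.ofReal (‖z‖ ^ 2) = ‖z‖ₑ ^ 2 := by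
  rw [ENNReal.ofReal_pow (norm_nonneg z), ofReal_norm]

lemma toReal_mul_enorm_sq (a : ℝ≥0∞) (z : E) : (a * ‖z‖ₑ ^ 2).toReal = a.toReal * ‖z‖ ^ 2 := by
  simp [ENNReal.toReal_mul, ENNReal.toReal_pow]

lemma memLp_two_iff_lintegral_enorm_sq_lt_top {g : X → E} (hg : AEStronglyMeasurable g μ) :
    MemLp g 2 μ ↔ ∫⁻ x, ‖g x‖ₑ ^ 2 ∂μ < ∞ := by
  rw [memLp_two_iff_integrable_sq_norm hg, Integrable,
    hasFiniteIntegral_iff_ofReal (ae_of_all _ fun x => sq_nonneg ‖g x‖)]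
  simp only [ofReal_norm_sq]
  exact and_iff_right (hg.norm.pow 2)

lemma integral_norm_sq_eq_toReal_lintegral {g : X → E} (hg : AEStronglyMeasurable g μ) :
    ∫ x, ‖g x‖ ^ 2 ∂μ = (∫⁻ x, ‖g x‖ₑ ^ 2 ∂μ).toReal := by
  rw [integral_eq_lintegral_of_nonneg_ae (ae_of_all _ fun x => sq_nonneg ‖g x‖) (hg.norm.pow 2)]
  simp only [ofReal_norm_sq]

lemma integral_toReal_mul_norm_sq {w : X → ℝ≥0∞} {f : X → E} (hw : AEMeasurable w μ)
    (hf : AEStronglyMeasurable f μ) (hw_fin : ∀ᵐ x ∂μ, w x < ∞) :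
    ∫ x, (w x).toReal * ‖f x‖ ^ 2 ∂μ = (∫⁻ x, w x * ‖f x‖ₑ ^ 2 ∂μ).toReal := by
  rw [← integral_toReal (f := fun x => w x * ‖f x‖ₑ ^ 2) (hw.mul (hf.enorm.pow_const 2))]
  · simp only [toReal_mul_enorm_sq]
  · filter_upwards [hw_fin] with x hx using mul_lt_top hx (pow_lt_top enorm_lt_top)

lemma integrable_toReal_mul_norm_sq {w : X → ℝ≥0∞} {f : X → E} (hw : AEMeasurable w μ)
    (hf : AEStronglyMeasurable f μ) (h : ∫⁻ x, w x * ‖f x‖ₑ ^ 2 ∂μ ≠ ∞) :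
    Integrable (fun x => (w x).toReal * ‖f x‖ ^ 2) μ := by
  simpa only [toReal_mul_enorm_sq] using integrable_toReal_of_lintegral_ne_top
    (f := fun x => w x * ‖f x‖ₑ ^ 2) (hw.mul (hf.enorm.pow_const 2)) h

lemma sum_mul_integral_norm_sq_eq {f : X → E} {g : ι → X → E} {w : ι → X → ℝ≥0∞}
    (s : Finset ι) (c : ι → ℝ) (hf : AEStronglyMeasurable f μ)
    (hw : ∀ j ∈ s, AEMeasurable (w j) μ) (hw_fin : ∀ j ∈ s, ∀ᵐ x ∂μ, w j x < ∞)
    (hg : ∀ j ∈ s, MemLp (g j) 2 μ)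
    (h : ∀ j ∈ s, ∫⁻ x, ‖g j x‖ₑ ^ 2 ∂μ = ∫⁻ x, w j x * ‖f x‖ₑ ^ 2 ∂μ) :
    ∑ j ∈ s, c j * ∫ x, ‖g j x‖ ^ 2 ∂μ =
      ∫ x, (∑ j ∈ s, c j * (w j x).toReal) * ‖f x‖ ^ 2 ∂μ := by
  have hint : ∀ j ∈ s, Integrable (fun x => c j * ((w j x).toReal * ‖f x‖ ^ 2)) μ := by
    intro j hj
    refine (integrable_toReal_mul_norm_sq (hw j hj) hf ?_).const_mul (c j)
    rw [← h j hj]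
    exact ((memLp_two_iff_lintegral_enorm_sq_lt_top (hg j hj).1).1 (hg j hj)).ne
  calc ∑ j ∈ s, c j * ∫ x, ‖g j x‖ ^ 2 ∂μ
      = ∑ j ∈ s, ∫ x, c j * ((w j x).toReal * ‖f x‖ ^ 2) ∂μ := by
        refine sum_congr rfl fun j hj => ?_
        rw [integral_const_mul, integral_toReal_mul_norm_sq (hw j hj) hf (hw_fin j hj),
          integral_norm_sq_eq_toReal_lintegral (hg j hj).1, h j hj]
    _ = ∫ x, (∑ j ∈ s, c j * (w j x).toReal) * ‖f x‖ ^ 2 ∂μ := by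
        rw [← integral_finsetSum s hint]
        simp only [sum_mul, mul_assoc]

lemma exists_measure_ne_zero_lt_top_forall_le [SigmaFinite μ] {G : Set X} (hG : MeasurableSet G)
    (hG0 : μ G ≠ 0) {g : X → ℝ≥0∞} (hg : Measurable g) (hg_fin : ∀ᵐ x ∂μ, g x < ∞) :
    ∃ A ⊆ G, MeasurableSet A ∧ μ A ≠ 0 ∧ μ A < ∞ ∧ ∃ M : ℕ, ∀ x ∈ A, g x ≤ M := by
  obtain ⟨M, hM⟩ : ∃ M : ℕ, μ (G ∩ {x | g x ≤ M}) ≠ 0 := by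
    by_contra! h
    refine hG0 (measure_mono_null_ae ?_ (measure_iUnion_null_iff.2 h))
    filter_upwards [hg_fin] with x hx hxG
    obtain ⟨M, hM⟩ := ENNReal.exists_nat_gt hx.ne
    exact Set.mem_iUnion.2 ⟨M, hxG, hM.le⟩
  obtain ⟨A, hA, hAM, hA0, hA_fin⟩ := Measure.exists_subset_measure_lt_top
    (hG.inter (measurableSet_le hg measurable_const)) (pos_iff_ne_zero.2 hM)
  exact ⟨A, hAM.trans Set.inter_subset_left, hA, hA0.ne', hA_fin, M, fun x hx => (hAM hx).2⟩

lemma lintegral_mul_enorm_sq_indicator_one {R : Type*} [NormedRing R] [NormOneClass R]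
    {A : Set X} (hA : MeasurableSet A) (w : X → ℝ≥0∞) :
    ∫⁻ x, w x * ‖A.indicator (1 : X → R) x‖ₑ ^ 2 ∂μ = ∫⁻ x in A, w x ∂μ := by
  rw [← lintegral_indicator hA]
  congr 1 with x
  by_cases hx : x ∈ A <;> simp [hx]

lemma integral_mul_norm_sq_indicator_one {R : Type*} [NormedRing R] [NormOneClass R]
    {A : Set X} (hA : MeasurableSet A) (F : X → ℝ) :
    ∫ x, F x * ‖A.indicator (1 : X → R) x‖ ^ 2 ∂μ = ∫ x in A, F x ∂μ := by
  rw [← integral_indicator hA]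
  congr 1 with x
  by_cases hx : x ∈ A <;> simp [hx]

lemma ae_sum_mul_toReal_nonpos_of_forall [SigmaFinite μ] {S : ι → (X → ℂ) → X → ℂ}
    {J : ι → X → ℝ≥0∞} (s : Finset ι) (c : ι → ℝ)
    (hS_meas : ∀ j ∈ s, ∀ f, Measurable f → Measurable (S j f))
    (hJ : ∀ j ∈ s, Measurable (J j)) (hJ_fin : ∀ j ∈ s, ∀ᵐ x ∂μ, J j x < ∞)
    (hS : ∀ j ∈ s, ∀ f, Measurable f →
      ∫⁻ x, ‖S j f x‖ₑ ^ 2 ∂μ = ∫⁻ x, J j x * ‖f x‖ₑ ^ 2 ∂μ)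
    (H : ∀ f, Measurable f → (∀ j ∈ s, MemLp (S j f) 2 μ) →
      ∑ j ∈ s, c j * ∫ x, ‖S j f x‖ ^ 2 ∂μ ≤ 0) :
    ∀ᵐ x ∂μ, ∑ j ∈ s, c j * (J j x).toReal ≤ 0 := by
  set Δ : X → ℝ := fun x => ∑ j ∈ s, c j * (J j x).toReal
  have hΔ : Measurable Δ :=
    Finset.measurable_sum s fun j hj => (hJ j hj).ennreal_toReal.const_mul _
  by_contra h
  obtain ⟨A, hAΔ, hA, hA0, hA_fin, M, hAM⟩ := exists_measure_ne_zero_lt_top_forall_le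
    (measurableSet_lt measurable_const hΔ) (by simpa [ae_iff] using h)
    (Finset.measurable_sum s hJ)
    (by filter_upwards [(Filter.eventually_all_finset s).2 hJ_fin] with x hx using sum_lt_top.2 hx)
  have hJA : ∀ j ∈ s, ∀ x ∈ A, J j x ≤ M := fun j hj x hx =>
    (single_le_sum (f := fun j => J j x) (fun j _ => zero_le) hj).trans (hAM x hx)
  set f : X → ℂ := A.indicator 1
  have hf : Measurable f := measurable_one.indicator hA
  have hmem : ∀ j ∈ s, MemLp (S j f) 2 μ := by
    intro j hj
    refine (memLp_two_iff_lintegral_enorm_sq_lt_top (hS_meas j hj f hf).aestronglyMeasurable).2 ?_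
    calc ∫⁻ x, ‖S j f x‖ₑ ^ 2 ∂μ = ∫⁻ x in A, J j x ∂μ := by
          rw [hS j hj f hf, lintegral_mul_enorm_sq_indicator_one hA]
      _ ≤ ∫⁻ _ in A, (M : ℝ≥0∞) ∂μ := setLIntegral_mono measurable_const (hJA j hj)
      _ < ∞ := by rw [setLIntegral_const]; exact mul_lt_top (natCast_lt_top M) hA_fin
  have hΔ_int : IntegrableOn Δ A μ := by
    refine integrable_finsetSum s fun j hj => Integrable.const_mul ?_ (c j)
    refine IntegrableOn.of_bound hA_fin (hJ j hj).ennreal_toReal.aestronglyMeasurable M ?_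
    filter_upwards [self_mem_ae_restrict hA] with x hx
    simpa using toReal_mono (natCast_ne_top M) (hJA j hj x hx)
  have hΔ_pos : 0 < ∫ x in A, Δ x ∂μ := by
    rw [setIntegral_pos_iff_support_of_nonneg_ae
      (ae_restrict_of_forall_mem hA fun x hx => (hAΔ hx).le) hΔ_int]
    exact (pos_iff_ne_zero.2 hA0).trans_le (measure_mono fun x hx => ⟨(hAΔ hx).ne', hx⟩)
  have hΔ_nonpos := H f hf hmem
  rw [sum_mul_integral_norm_sq_eq s c hf.aestronglyMeasurable (fun j hj => (hJ j hj).aemeasurable)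
    hJ_fin hmem fun j hj => hS j hj f hf, integral_mul_norm_sq_indicator_one hA] at hΔ_nonpos
  exact hΔ_pos.not_ge hΔ_nonpos

lemma lintegral_mul_comp_eq_lintegral_rnDeriv_mul [SigmaFinite μ] {φ : X → X}
    (hφ : Measurable φ) (hns : μ.map φ ≪ μ) {w g : X → ℝ≥0∞} (hw : Measurable w)
    (hg : Measurable g) :
    ∫⁻ x, w x * g (φ x) ∂μ = ∫⁻ y, ((μ.withDensity w).map φ).rnDeriv μ y * g y ∂μ := by
  have hac : (μ.withDensity w).map φ ≪ μ :=
    ((withDensity_absolutelyContinuous μ w).map hφ).trans hns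
  calc ∫⁻ x, w x * g (φ x) ∂μ = ∫⁻ y, g y ∂(μ.withDensity w).map φ := by
        rw [lintegral_map hg hφ]
        exact (lintegral_withDensity_eq_lintegral_mul μ hw (hg.comp hφ)).symm
    _ = ∫⁻ y, ((μ.withDensity w).map φ).rnDeriv μ y * g y ∂μ := by
        nth_rw 1 [← Measure.withDensity_rnDeriv_eq _ _ hac]
        exact lintegral_withDensity_eq_lintegral_mul μ (Measure.measurable_rnDeriv _ _) hg

def weightedComp (u : X → ℂ) (φ : X → X) (f : X → ℂ) : X → ℂ := fun x => u x * f (φ x)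

variable {u : X → ℂ} {φ : X → X}

lemma Measurable.weightedComp_iterate {f : X → ℂ} (hf : Measurable f) (hu : Measurable u)
    (hφ : Measurable φ) (j : ℕ) : Measurable ((weightedComp u φ)^[j] f) := by
  induction j generalizing f with
  | zero => exact hf
  | succ j ih => exact ih (f := weightedComp u φ f) (hu.mul (hf.comp hφ))

lemma measurable_of_rnDeriv_recursion {J : ℕ → X → ℝ≥0∞} (hJ0 : J 0 = fun _ => 1)
    (hJ : ∀ i : ℕ, J (i + 1) =
      ((μ.withDensity fun x => J i x * (‖u x‖₊ : ℝ≥0∞) ^ 2).map φ).rnDeriv μ)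
    (j : ℕ) : Measurable (J j) := by
  cases j with
  | zero => rw [hJ0]; exact measurable_const
  | succ j => rw [hJ j]; exact Measure.measurable_rnDeriv _ _

lemma lintegral_enorm_sq_weightedComp_iterate [SigmaFinite μ] (hu : Measurable u)
    (hφ : Measurable φ) (hns : μ.map φ ≪ μ) {J : ℕ → X → ℝ≥0∞} (hJ0 : J 0 = fun _ => 1)
    (hJ : ∀ i : ℕ, J (i + 1) =
      ((μ.withDensity fun x => J i x * (‖u x‖₊ : ℝ≥0∞) ^ 2).map φ).rnDeriv μ)
    (j : ℕ) {f : X → ℂ} (hf : Measurable f) :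
    ∫⁻ x, ‖(weightedComp u φ)^[j] f x‖ₑ ^ 2 ∂μ = ∫⁻ x, J j x * ‖f x‖ₑ ^ 2 ∂μ := by
  induction j generalizing f with
  | zero => simp [hJ0]
  | succ j ih =>
    rw [Function.iterate_succ_apply, ih (f := weightedComp u φ f) (hu.mul (hf.comp hφ)), hJ j]
    simp only [weightedComp, enorm_mul, mul_pow, ← mul_assoc]
    exact lintegral_mul_comp_eq_lintegral_rnDeriv_mul hφ hns
      ((measurable_of_rnDeriv_recursion hJ0 hJ j).mul (hu.enorm.pow_const 2))
      (hf.enorm.pow_const 2)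

end

theorem stmt14_general
    {X : Type*} [MeasurableSpace X] (μ : Measure X) [SigmaFinite μ]
    (u : X → ℂ) (hu : Measurable u)
    (φ : X → X) (hφ : Measurable φ)
    (hns : (μ.map φ) ≪ μ)
    (J : ℕ → X → ℝ≥0∞)
    (hJ0 : J 0 = fun _ => 1)
    (hJ : ∀ i : ℕ, J (i + 1) =
      ((μ.withDensity fun x => J i x * (‖u x‖₊ : ℝ≥0∞) ^ 2).map φ).rnDeriv μ)
    (hfin : ∀ i, ∀ᵐ x ∂μ, J i x < ∞)
    (T : (X → ℂ) → X → ℂ) (hT : T = fun f x => u x * f (φ x))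
    (k : ℕ) :
    (∀ n : ℕ, 1 ≤ n → n ≤ k →
        ∀ f : X → ℂ, Measurable f → (∀ j ≤ n, MemLp (T^[j] f) 2 μ) →
          ∑ j ∈ range (n + 1),
            (-1 : ℝ) ^ j * (n.choose j) * ∫ x, ‖(T^[j] f) x‖ ^ 2 ∂μ ≤ 0) ↔
      ∀ i : ℕ, 1 ≤ i → i ≤ k →
        ∀ᵐ x ∂μ, ∑ j ∈ range (i + 1),
            (-1 : ℝ) ^ j * (i.choose j) * (J j x).toReal ≤ 0 := by
  obtain rfl : T = weightedComp u φ := hT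
  have hJm := measurable_of_rnDeriv_recursion hJ0 hJ
  have hnorm j {f : X → ℂ} (hf : Measurable f) :=
    lintegral_enorm_sq_weightedComp_iterate (μ := μ) hu hφ hns hJ0 hJ j hf
  refine forall₃_congr fun n _ _ => ⟨fun H => ?_, fun hΔ f hf hmem => ?_⟩
  · refine ae_sum_mul_toReal_nonpos_of_forall _ _ (fun j _ f hf => hf.weightedComp_iterate hu hφ j)
      (fun j _ => hJm j) (fun j _ => hfin j) (fun j _ f hf => hnorm j hf) fun f hf hmem => ?_
    exact H f hf fun j hj => hmem j (mem_range_succ_iff.2 hj)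
  · rw [sum_mul_integral_norm_sq_eq _ _ hf.aestronglyMeasurable (fun j _ => (hJm j).aemeasurable)
      (fun j _ => hfin j) (fun j hj => hmem j (mem_range_succ_iff.1 hj)) fun j _ => hnorm j hf]
    exact integral_nonpos_of_ae <|
      hΔ.mono fun x hx => mul_nonpos_of_nonpos_of_nonneg hx (sq_nonneg _)

/-- Theorem 2.12(i): `uC_φ` is `k`-hyperexpansive iff `Δ_{J,i} ≤ 0` a.e.
for every `i = 1, …, k`. -/
theorem stmt14
    {X : Type*} [MeasurableSpace X] (μ : Measure X) [SigmaFinite μ]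
    (u : X → ℂ) (hu : Measurable u)
    (φ : X → X) (hφ : Measurable φ)
    (hns : (μ.map φ) ≪ μ)
    (J : ℕ → X → ℝ≥0∞)
    (hJ0 : J 0 = fun _ => 1)
    (hJ : ∀ i : ℕ, J (i + 1) =
      ((μ.withDensity fun x => J i x * (‖u x‖₊ : ℝ≥0∞) ^ 2).map φ).rnDeriv μ)
    (hfin : ∀ i, ∀ᵐ x ∂μ, J i x < ∞)
    (T : (X → ℂ) → X → ℂ) (hT : T = fun f x => u x * f (φ x))
    (k : ℕ) (hk : 1 ≤ k)
    (hdense : Dense {f : Lp ℂ 2 μ |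
        ∀ i ≤ 2, MemLp (T^[i] (f : X → ℂ)) 2 μ}) :
    (∀ n : ℕ, 1 ≤ n → n ≤ k →
        ∀ f : X → ℂ, Measurable f → (∀ j ≤ n, MemLp (T^[j] f) 2 μ) →
          ∑ j ∈ range (n + 1),
            (-1 : ℝ) ^ j * (n.choose j) * ∫ x, ‖(T^[j] f) x‖ ^ 2 ∂μ ≤ 0) ↔
      ∀ i : ℕ, 1 ≤ i → i ≤ k →
        ∀ᵐ x ∂μ, ∑ j ∈ range (i + 1),
            (-1 : ℝ) ^ j * (i.choose j) * (J j x).toReal ≤ 0 :=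
  stmt14_general μ u hu φ hφ hns J hJ0 hJ hfin T hT k
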